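/- Let p be a probability vector on C classes vanishing on a nonempty set C_f, and q a strictly positive probability vector on C classes. Then KL(p‖q) ≥ −log(1 − Σ_{c ∈ C_f} q_c), i.e., the KL divergence from the masked teacher distribution to the student is lower-bounded by −log of the student's total retained mass. -/

import Mathlib

/-! Jensen's inequality for `log` gives `KL(p‖q) ≥ -log (∑ q c)` over the support of `p`, which
lies in the complement of `C_f`, so that sum is at most the retained mass `1 - ∑_{c ∈ C_f} q c`. -/

open Finset

noncomputable def klDiv {C : ℕ} (p q : Fin C → ℝ) : ℝ :=
  ∑ c, if p c = 0 then 0 else p c * Real.log (p c / q c)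

open Real

theorem neg_log_sum_le_sum_mul_log_div {ι : Type*} {s : Finset ι} {p q : ι → ℝ}
    (hp : ∀ i ∈ s, 0 < p i) (hp1 : ∑ i ∈ s, p i = 1) (hq : ∀ i ∈ s, 0 < q i) :
    -log (∑ i ∈ s, q i) ≤ ∑ i ∈ s, p i * log (p i / q i) := by
  have jensen := strictConcaveOn_log_Ioi.concaveOn.le_map_sum (t := s) (w := p)
    (p := fun i => q i / p i) (fun i hi => (hp i hi).le) hp1
    (fun i hi => div_pos (hq i hi) (hp i hi))
  have hmean : ∑ i ∈ s, p i • (q i / p i) = ∑ i ∈ s, q i :=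
    sum_congr rfl fun i hi => mul_div_cancel₀ _ (hp i hi).ne'
  have hlog : ∑ i ∈ s, p i • log (q i / p i) = -∑ i ∈ s, p i * log (p i / q i) := by
    rw [← sum_neg_distrib]
    refine sum_congr rfl fun i _ => ?_
    rw [smul_eq_mul, ← inv_div, log_inv, mul_neg]
  rw [hmean, hlog] at jensen
  linarith

theorem klDiv_eq_sum_support {C : ℕ} (p q : Fin C → ℝ) :
    klDiv p q = ∑ c ∈ {c | p c ≠ 0}, p c * log (p c / q c) := by
  simp only [klDiv, sum_filter, ite_not]

theorem neg_log_sum_support_le_klDiv {C : ℕ} {p q : Fin C → ℝ}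
    (hp0 : ∀ c, 0 ≤ p c) (hp1 : ∑ c, p c = 1) (hq : ∀ c, p c ≠ 0 → 0 < q c) :
    -log (∑ c ∈ {c | p c ≠ 0}, q c) ≤ klDiv p q := by
  rw [klDiv_eq_sum_support]
  refine neg_log_sum_le_sum_mul_log_div (fun c hc => ?_) ?_
    (fun c hc => hq c (mem_filter.1 hc).2)
  · exact (hp0 c).lt_of_ne' (mem_filter.1 hc).2
  · rw [← hp1]
    exact sum_filter_of_ne fun c _ h => h

theorem klDiv_lower_bound_retained_mass_general
    {C : ℕ} (Cf : Finset (Fin C))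
    (p q : Fin C → ℝ)
    (hp0 : ∀ c, 0 ≤ p c) (hp1 : ∑ c, p c = 1)
    (hpCf : ∀ c ∈ Cf, p c = 0)
    (hq0 : ∀ c, 0 < q c) (hq1 : ∑ c, q c = 1) :
    -Real.log (1 - ∑ c ∈ Cf, q c) ≤ klDiv p q := by
  obtain ⟨c₀, -, hc₀⟩ := exists_ne_zero_of_sum_ne_zero (hp1 ▸ one_ne_zero)
  have hsupport_pos : 0 < ∑ c ∈ {c | p c ≠ 0}, q c :=
    sum_pos (fun c _ => hq0 c) ⟨c₀, by simpa using hc₀⟩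
  have hsupport_sub : ({c | p c ≠ 0} : Finset (Fin C)) ⊆ Cfᶜ :=
    fun c hc => mem_compl.2 fun hcf => (mem_filter.1 hc).2 (hpCf c hcf)
  have hretained : 1 - ∑ c ∈ Cf, q c = ∑ c ∈ Cfᶜ, q c := by
    rw [← hq1, ← sum_add_sum_compl Cf]
    ring
  calc -log (1 - ∑ c ∈ Cf, q c)
      ≤ -log (∑ c ∈ {c | p c ≠ 0}, q c) := by
        rw [hretained]
        exact neg_le_neg <| log_le_log hsupport_pos <|
          sum_le_sum_of_subset_of_nonneg hsupport_sub fun c _ _ => (hq0 c).le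
    _ ≤ klDiv p q := neg_log_sum_support_le_klDiv hp0 hp1 fun c _ => hq0 c

/-- For p a probability vector vanishing on a nonempty set C_f and q a strictly
positive probability vector, KL(p‖q) ≥ −log(1 − Σ_{c ∈ C_f} q_c). -/
theorem klDiv_lower_bound_retained_mass
    {C : ℕ} (Cf : Finset (Fin C)) (hCf : Cf.Nonempty) (hCf' : Cf ⊂ Finset.univ)
    (p q : Fin C → ℝ)
    (hp0 : ∀ c, 0 ≤ p c) (hp1 : ∑ c, p c = 1)
    (hpCf : ∀ c ∈ Cf, p c = 0)
    (hq0 : ∀ c, 0 < q c) (hq1 : ∑ c, q c = 1) :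
    -Real.log (1 - ∑ c ∈ Cf, q c) ≤ klDiv p q :=
  klDiv_lower_bound_retained_mass_general Cf p q hp0 hp1 hpCf hq0 hq1
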